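/- Convergence of minimizing directions (claims (5.1) and (5.4) in the proof of Lemma 5.1): Let p_m → p in ℝ^n with p ≠ 0 and let symmetric matrices M_m → M. For each m, the continuous function (θ⁺,d⁺) ↦ sup_{(θ⁻,d⁻)∈ℋ_m} Φ̃(θ⁺,θ⁻,d⁺,d⁻,p_m,M_m) attains its infimum over the compact set ℋ_m at some point (θ_m⁺, d_m⁺), and for every such choice of minimizers one has θ_m⁺ · p_m → |p| and θ_m⁺ → p/|p| as m → ∞. -/

import Mathlib

open scoped RealInnerProductSpace
open Filter Topology

noncomputable section

namespace TugOfWar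

/-- The quadratic form `vᵀ Σ M Σ v`, where `Σ = diag (σ 1, …, σ n)`. -/
def sigQF {n : ℕ} (σ : Fin n → ℝ) (M : Matrix (Fin n) (Fin n) ℝ)
    (v : EuclideanSpace ℝ (Fin n)) : ℝ :=
  ∑ i, ∑ j, (σ i * v i) * M i j * (σ j * v j)

/-- `trace (Σ² M)`. -/
def trSig2 {n : ℕ} (σ : Fin n → ℝ) (M : Matrix (Fin n) (Fin n) ℝ) : ℝ :=
  ∑ i, σ i ^ 2 * M i i

/-- The integrand `Φ(θ⁺,θ⁻,d⁺,d⁻,p,M)`. -/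
def Phi {n : ℕ} (σ : Fin n → ℝ) (μ : EuclideanSpace ℝ (Fin n))
    (θp θm : EuclideanSpace ℝ (Fin n)) (dp dm : ℝ)
    (p : EuclideanSpace ℝ (Fin n)) (M : Matrix (Fin n) (Fin n) ℝ) : ℝ :=
  -(1 / 2) * sigQF σ M (θp - θm) - (1 / 2) * trSig2 σ M
    - (dp + dm) * ⟪θp + θm, p⟫ - ⟪μ, p⟫

/-- The control set `ℋ_m = S^{n-1} × [0, m]`. -/
def Hset (n : ℕ) (m : ℕ) : Set (EuclideanSpace ℝ (Fin n) × ℝ) :=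
  {a | ‖a.1‖ = 1 ∧ a.2 ∈ Set.Icc (0 : ℝ) (m : ℝ)}

/-- `H_m⁺(ξ,p,M) = sup_{(θ⁻,d⁻)∈ℋ_m} inf_{(θ⁺,d⁺)∈ℋ_m} Φ + rξ`. -/
def Hplus {n : ℕ} (σ : Fin n → ℝ) (μ : EuclideanSpace ℝ (Fin n)) (r : ℝ) (m : ℕ)
    (ξ : ℝ) (p : EuclideanSpace ℝ (Fin n)) (M : Matrix (Fin n) (Fin n) ℝ) : ℝ :=
  sSup ((fun a => sInf ((fun b => Phi σ μ b.1 a.1 b.2 a.2 p M) '' Hset n m)) '' Hset n m)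
    + r * ξ

/-- `H_m⁻(ξ,p,M) = inf_{(θ⁺,d⁺)∈ℋ_m} sup_{(θ⁻,d⁻)∈ℋ_m} Φ + rξ`. -/
def Hminus {n : ℕ} (σ : Fin n → ℝ) (μ : EuclideanSpace ℝ (Fin n)) (r : ℝ) (m : ℕ)
    (ξ : ℝ) (p : EuclideanSpace ℝ (Fin n)) (M : Matrix (Fin n) (Fin n) ℝ) : ℝ :=
  sInf ((fun b => sSup ((fun a => Phi σ μ b.1 a.1 b.2 a.2 p M) '' Hset n m)) '' Hset n m)
    + r * ξ

/-- The limit operator `F(ξ,p,M)`, for `p ≠ 0`. -/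
def Fop {n : ℕ} (σ : Fin n → ℝ) (μ : EuclideanSpace ℝ (Fin n)) (r : ℝ)
    (ξ : ℝ) (p : EuclideanSpace ℝ (Fin n)) (M : Matrix (Fin n) (Fin n) ℝ) : ℝ :=
  (2 / ‖p‖ ^ 2) * sigQF σ M p + (1 / 2) * trSig2 σ M + ⟪μ, p⟫ - r * ξ

/-- `F^*(ξ,0,M) = limsup_{p → 0, p ≠ 0} F(ξ,p,M)`. -/
def Fupper {n : ℕ} (σ : Fin n → ℝ) (μ : EuclideanSpace ℝ (Fin n)) (r : ℝ)
    (ξ : ℝ) (M : Matrix (Fin n) (Fin n) ℝ) : ℝ :=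
  Filter.limsup (fun p => Fop σ μ r ξ p M) (𝓝[≠] (0 : EuclideanSpace ℝ (Fin n)))

/-- `F_*(ξ,0,M) = liminf_{p → 0, p ≠ 0} F(ξ,p,M)`. -/
def Flower {n : ℕ} (σ : Fin n → ℝ) (μ : EuclideanSpace ℝ (Fin n)) (r : ℝ)
    (ξ : ℝ) (M : Matrix (Fin n) (Fin n) ℝ) : ℝ :=
  Filter.liminf (fun p => Fop σ μ r ξ p M) (𝓝[≠] (0 : EuclideanSpace ℝ (Fin n)))

/-- The parabolic domain `ℝ^n × [0,T]`. -/
def Dom (n : ℕ) (T : ℝ) : Set (EuclideanSpace ℝ (Fin n) × ℝ) :=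
  Set.univ ×ˢ Set.Icc 0 T

/-- Test functions: `φ` is `C¹` in time with derivative `φt`, and `C²` in space with spatial
gradient `Dφ` and (symmetric) spatial Hessian `D2φ`, all jointly continuous. -/
def IsC12 {n : ℕ} (φ φt : EuclideanSpace ℝ (Fin n) → ℝ → ℝ)
    (Dφ : EuclideanSpace ℝ (Fin n) → ℝ → EuclideanSpace ℝ (Fin n))
    (D2φ : EuclideanSpace ℝ (Fin n) → ℝ → Matrix (Fin n) (Fin n) ℝ) : Prop :=
  Continuous (fun q : EuclideanSpace ℝ (Fin n) × ℝ => φt q.1 q.2) ∧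
  Continuous (fun q : EuclideanSpace ℝ (Fin n) × ℝ => Dφ q.1 q.2) ∧
  Continuous (fun q : EuclideanSpace ℝ (Fin n) × ℝ => D2φ q.1 q.2) ∧
  (∀ x t, HasDerivAt (fun s => φ x s) (φt x t) t) ∧
  (∀ x t, HasGradientAt (fun y => φ y t) (Dφ x t) x) ∧
  (∀ x t, HasFDerivAt (fun y => Dφ y t) (Matrix.toEuclideanCLM (𝕜 := ℝ) (D2φ x t)) x) ∧
  (∀ x t, (D2φ x t).IsSymm)

/-- At most linear growth on `ℝ^n × [0,T]`. -/
def LinGrowth {n : ℕ} (T : ℝ) (u : EuclideanSpace ℝ (Fin n) → ℝ → ℝ) : Prop :=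
  ∃ c : ℝ, ∀ x t, t ∈ Set.Icc 0 T → |u x t| ≤ c * (1 + ‖x‖)

/-- Continuity on `ℝ^n × [0,T]`. -/
def ContOn {n : ℕ} (T : ℝ) (u : EuclideanSpace ℝ (Fin n) → ℝ → ℝ) : Prop :=
  ContinuousOn (fun q : EuclideanSpace ℝ (Fin n) × ℝ => u q.1 q.2) (Dom n T)

/-- The payoff `g` is positive, and `sup g + Lip(g) ≤ L`. -/
def PayoffOK {n : ℕ} (g : EuclideanSpace ℝ (Fin n) → ℝ) (L : ℝ) : Prop :=
  (∀ x, 0 < g x) ∧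
  ∃ B K : ℝ, B + K ≤ L ∧ (∀ x, g x ≤ B) ∧ ∀ x y, |g x - g y| ≤ K * ‖x - y‖

/-- Viscosity supersolution of `∂ₜ u − H(u,Du,D²u) = 0` with terminal data `g`. -/
def SuperSolH {n : ℕ} (T : ℝ)
    (H : ℝ → EuclideanSpace ℝ (Fin n) → Matrix (Fin n) (Fin n) ℝ → ℝ)
    (g : EuclideanSpace ℝ (Fin n) → ℝ) (u : EuclideanSpace ℝ (Fin n) → ℝ → ℝ) : Prop :=
  LowerSemicontinuousOn (fun q : EuclideanSpace ℝ (Fin n) × ℝ => u q.1 q.2) (Dom n T) ∧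
  LinGrowth T u ∧
  (∀ x, g x ≤ u x T) ∧
  ∀ x₀ t₀, t₀ ∈ Set.Ioo 0 T →
    ∀ φ φt Dφ D2φ, IsC12 φ φt Dφ D2φ →
      u x₀ t₀ = φ x₀ t₀ →
      (∀ x t, t ∈ Set.Icc 0 T → (x, t) ≠ (x₀, t₀) → φ x t < u x t) →
      φt x₀ t₀ ≤ H (u x₀ t₀) (Dφ x₀ t₀) (D2φ x₀ t₀)

/-- Viscosity subsolution of `∂ₜ u − H(u,Du,D²u) = 0` with terminal data `g`. -/
def SubSolH {n : ℕ} (T : ℝ)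
    (H : ℝ → EuclideanSpace ℝ (Fin n) → Matrix (Fin n) (Fin n) ℝ → ℝ)
    (g : EuclideanSpace ℝ (Fin n) → ℝ) (u : EuclideanSpace ℝ (Fin n) → ℝ → ℝ) : Prop :=
  UpperSemicontinuousOn (fun q : EuclideanSpace ℝ (Fin n) × ℝ => u q.1 q.2) (Dom n T) ∧
  LinGrowth T u ∧
  (∀ x, u x T ≤ g x) ∧
  ∀ x₀ t₀, t₀ ∈ Set.Ioo 0 T →
    ∀ φ φt Dφ D2φ, IsC12 φ φt Dφ D2φ →
      u x₀ t₀ = φ x₀ t₀ →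
      (∀ x t, t ∈ Set.Icc 0 T → (x, t) ≠ (x₀, t₀) → u x t < φ x t) →
      H (u x₀ t₀) (Dφ x₀ t₀) (D2φ x₀ t₀) ≤ φt x₀ t₀

/-- Continuous viscosity solution of `∂ₜ u − H(u,Du,D²u) = 0` with terminal data `g`. -/
def SolH {n : ℕ} (T : ℝ)
    (H : ℝ → EuclideanSpace ℝ (Fin n) → Matrix (Fin n) (Fin n) ℝ → ℝ)
    (g : EuclideanSpace ℝ (Fin n) → ℝ) (u : EuclideanSpace ℝ (Fin n) → ℝ → ℝ) : Prop :=
  ContOn T u ∧ SuperSolH T H g u ∧ SubSolH T H g u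

/-- Viscosity supersolution of `∂ₜ u + F(u,Du,D²u) = 0` with terminal data `g`. -/
def SuperSolF {n : ℕ} (T : ℝ) (σ : Fin n → ℝ) (μ : EuclideanSpace ℝ (Fin n)) (r : ℝ)
    (g : EuclideanSpace ℝ (Fin n) → ℝ) (u : EuclideanSpace ℝ (Fin n) → ℝ → ℝ) : Prop :=
  LowerSemicontinuousOn (fun q : EuclideanSpace ℝ (Fin n) × ℝ => u q.1 q.2) (Dom n T) ∧
  LinGrowth T u ∧
  (∀ x, g x ≤ u x T) ∧
  ∀ x₀ t₀, t₀ ∈ Set.Ioo 0 T →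
    ∀ φ φt Dφ D2φ, IsC12 φ φt Dφ D2φ →
      u x₀ t₀ = φ x₀ t₀ →
      (∀ x t, t ∈ Set.Icc 0 T → (x, t) ≠ (x₀, t₀) → φ x t < u x t) →
      (Dφ x₀ t₀ ≠ 0 →
        φt x₀ t₀ + Fop σ μ r (u x₀ t₀) (Dφ x₀ t₀) (D2φ x₀ t₀) ≤ 0) ∧
      (Dφ x₀ t₀ = 0 →
        φt x₀ t₀ + Flower σ μ r (u x₀ t₀) (D2φ x₀ t₀) ≤ 0)

/-- Viscosity subsolution of `∂ₜ u + F(u,Du,D²u) = 0` with terminal data `g`. -/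
def SubSolF {n : ℕ} (T : ℝ) (σ : Fin n → ℝ) (μ : EuclideanSpace ℝ (Fin n)) (r : ℝ)
    (g : EuclideanSpace ℝ (Fin n) → ℝ) (u : EuclideanSpace ℝ (Fin n) → ℝ → ℝ) : Prop :=
  UpperSemicontinuousOn (fun q : EuclideanSpace ℝ (Fin n) × ℝ => u q.1 q.2) (Dom n T) ∧
  LinGrowth T u ∧
  (∀ x, u x T ≤ g x) ∧
  ∀ x₀ t₀, t₀ ∈ Set.Ioo 0 T →
    ∀ φ φt Dφ D2φ, IsC12 φ φt Dφ D2φ →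
      u x₀ t₀ = φ x₀ t₀ →
      (∀ x t, t ∈ Set.Icc 0 T → (x, t) ≠ (x₀, t₀) → u x t < φ x t) →
      (Dφ x₀ t₀ ≠ 0 →
        0 ≤ φt x₀ t₀ + Fop σ μ r (u x₀ t₀) (Dφ x₀ t₀) (D2φ x₀ t₀)) ∧
      (Dφ x₀ t₀ = 0 →
        0 ≤ φt x₀ t₀ + Fupper σ μ r (u x₀ t₀) (D2φ x₀ t₀))

/-- Continuous viscosity solution of `∂ₜ u + F(u,Du,D²u) = 0` with terminal data `g`. -/
def SolF {n : ℕ} (T : ℝ) (σ : Fin n → ℝ) (μ : EuclideanSpace ℝ (Fin n)) (r : ℝ)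
    (g : EuclideanSpace ℝ (Fin n) → ℝ) (u : EuclideanSpace ℝ (Fin n) → ℝ → ℝ) : Prop :=
  ContOn T u ∧ SuperSolF T σ μ r g u ∧ SubSolF T σ μ r g u

/-- The barrier `w̄(x,t) = g(y) + (A/ε²)(T−t) + 2L(|x−y|² + ε)^{1/2}`. -/
def barrierUp {n : ℕ} (g : EuclideanSpace ℝ (Fin n) → ℝ) (L A ε T : ℝ)
    (y : EuclideanSpace ℝ (Fin n)) : EuclideanSpace ℝ (Fin n) → ℝ → ℝ :=
  fun x t => g y + (A / ε ^ 2) * (T - t) + 2 * L * Real.sqrt (‖x - y‖ ^ 2 + ε)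

/-- The barrier `w̲(x,t) = g(y) − (A/ε²)(T−t) − 2L(|x−y|² + ε)^{1/2}`. -/
def barrierDown {n : ℕ} (g : EuclideanSpace ℝ (Fin n) → ℝ) (L A ε T : ℝ)
    (y : EuclideanSpace ℝ (Fin n)) : EuclideanSpace ℝ (Fin n) → ℝ → ℝ :=
  fun x t => g y - (A / ε ^ 2) * (T - t) - 2 * L * Real.sqrt (‖x - y‖ ^ 2 + ε)

/-- `Φ̃(θ⁺,θ⁻,d⁺,d⁻,p,M)`: the part of `Φ` sensitive to the inf–sup. -/
def PhiT {n : ℕ} (σ : Fin n → ℝ) (θp θm : EuclideanSpace ℝ (Fin n)) (dp dm : ℝ)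
    (p : EuclideanSpace ℝ (Fin n)) (M : Matrix (Fin n) (Fin n) ℝ) : ℝ :=
  -(1 / 2) * sigQF σ M (θp - θm) - (dp + dm) * ⟪θp + θm, p⟫

/-- `sup_{(θ⁻,d⁻)∈ℋ_m} Φ̃(θ⁺,θ⁻,d⁺,d⁻,p,M)` as a function of `a = (θ⁺,d⁺)`. -/
def supPhiT {n : ℕ} (σ : Fin n → ℝ) (m : ℕ) (a : EuclideanSpace ℝ (Fin n) × ℝ)
    (p : EuclideanSpace ℝ (Fin n)) (M : Matrix (Fin n) (Fin n) ℝ) : ℝ :=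
  sSup ((fun b => PhiT σ a.1 b.1 a.2 b.2 p M) '' Hset n m)

/-- `Φ̃_m(p,M) = inf_{(θ⁺,d⁺)∈ℋ_m} sup_{(θ⁻,d⁻)∈ℋ_m} Φ̃`. -/
def PhiTm {n : ℕ} (σ : Fin n → ℝ) (m : ℕ)
    (p : EuclideanSpace ℝ (Fin n)) (M : Matrix (Fin n) (Fin n) ℝ) : ℝ :=
  sInf ((fun a => supPhiT σ m a p M) '' Hset n m)

/-- The set of values appearing in the parabolic sup-convolution. -/
def supConvSet {n : ℕ} (T ε : ℝ) (u : EuclideanSpace ℝ (Fin n) → ℝ → ℝ)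
    (x₀ : EuclideanSpace ℝ (Fin n)) (t₀ : ℝ) : Set ℝ :=
  {y | ∃ x t, t ∈ Set.Icc 0 T ∧ y = u x t - ((t₀ - t) ^ 2 + ‖x₀ - x‖ ^ 2) / (2 * ε)}


/-! Let `C` bound `|vᵀ Σ Mₘ Σ v|` for `‖v‖ ≤ 2` uniformly in `m` (the `Mₘ` converge) and put
`q = pₘ / ‖pₘ‖`. Playing `(q, 0)` keeps the inner sup below `C / 2`, since then
`(θ⁺ + θ⁻) · pₘ ≥ 0`; against a minimizer `(θ⁺, d⁺)` the answer `(-q, m)` yields at least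
`-C / 2 + m (‖pₘ‖ - θ⁺ · pₘ)`. Hence `0 ≤ ‖pₘ‖ - θ⁺ · pₘ ≤ C / m`, and a unit vector whose
inner product with `pₘ` approaches `‖p‖` must approach `p / ‖p‖`. -/

section UnitVectors

variable {F : Type*} [NormedAddCommGroup F] [InnerProductSpace ℝ F] {ι : Type*} {l : Filter ι}

theorem tendsto_of_norm_eq_one_of_tendsto_inner {u : ι → F} {v : F} (hu : ∀ i, ‖u i‖ = 1)
    (hv : ‖v‖ = 1) (h : Tendsto (fun i => ⟪u i, v⟫) l (𝓝 1)) : Tendsto u l (𝓝 v) := by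
  have hsq : Tendsto (fun i => ‖u i - v‖ ^ 2) l (𝓝 0) := by
    have h2 : Tendsto (fun i => 2 - 2 * ⟪u i, v⟫) l (𝓝 (2 - 2 * 1)) :=
      tendsto_const_nhds.sub (h.const_mul 2)
    norm_num at h2
    refine h2.congr fun i => ?_
    rw [norm_sub_sq_real, hu, hv]
    ring
  rw [tendsto_iff_norm_sub_tendsto_zero]
  simpa [Real.sqrt_sq (norm_nonneg _)] using hsq.sqrt

theorem tendsto_normalize_of_tendsto_inner {u y : ι → F} {y₀ : F} (hu : ∀ i, ‖u i‖ = 1)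
    (hy : Tendsto y l (𝓝 y₀)) (hy₀ : y₀ ≠ 0)
    (h : Tendsto (fun i => ⟪u i, y i⟫) l (𝓝 ‖y₀‖)) : Tendsto u l (𝓝 (‖y₀‖⁻¹ • y₀)) := by
  have hy₀' : ‖y₀‖ ≠ 0 := norm_ne_zero_iff.mpr hy₀
  have herr : Tendsto (fun i => ⟪u i, y i - y₀⟫) l (𝓝 0) :=
    squeeze_zero_norm (fun i => (norm_inner_le_norm _ _).trans (by rw [hu, one_mul]))
      (tendsto_iff_norm_sub_tendsto_zero.mp hy)
  refine tendsto_of_norm_eq_one_of_tendsto_inner hu (norm_smul_inv_norm hy₀) ?_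
  have hlim := (h.sub herr).const_mul ‖y₀‖⁻¹
  rw [sub_zero, inv_mul_cancel₀ hy₀'] at hlim
  refine hlim.congr fun i => ?_
  rw [real_inner_smul_right, inner_sub_right, sub_sub_cancel]

end UnitVectors

section MinimizingDirections

variable {n : ℕ}

lemma continuous_sigQF (σ : Fin n → ℝ) :
    Continuous fun x : Matrix (Fin n) (Fin n) ℝ × EuclideanSpace ℝ (Fin n) =>
      sigQF σ x.1 x.2 := by
  unfold sigQF
  fun_prop

lemma continuous_PhiT (σ : Fin n → ℝ) (p : EuclideanSpace ℝ (Fin n))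
    (M : Matrix (Fin n) (Fin n) ℝ) :
    Continuous fun x : (EuclideanSpace ℝ (Fin n) × ℝ) × (EuclideanSpace ℝ (Fin n) × ℝ) =>
      PhiT σ x.1.1 x.2.1 x.1.2 x.2.2 p M := by
  unfold PhiT sigQF
  fun_prop

lemma Hset_eq_sphere_prod_Icc (m : ℕ) :
    Hset n m = Metric.sphere (0 : EuclideanSpace ℝ (Fin n)) 1 ×ˢ Set.Icc 0 (m : ℝ) := by
  ext a
  simp [Hset]

lemma isCompact_Hset (m : ℕ) : IsCompact (Hset n m) := by
  rw [Hset_eq_sphere_prod_Icc]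
  exact (isCompact_sphere _ _).prod isCompact_Icc

lemma Hset_nonempty (hn : 1 ≤ n) (m : ℕ) : (Hset n m).Nonempty :=
  ⟨(EuclideanSpace.single ⟨0, hn⟩ 1, 0), by simp [Hset]⟩

lemma continuous_supPhiT (σ : Fin n → ℝ) (m : ℕ) (p : EuclideanSpace ℝ (Fin n))
    (M : Matrix (Fin n) (Fin n) ℝ) :
    Continuous fun a => supPhiT σ m a p M :=
  (isCompact_Hset m).continuous_sSup (continuous_PhiT σ p M)

lemma exists_isMinOn_supPhiT (hn : 1 ≤ n) (σ : Fin n → ℝ) (m : ℕ)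
    (p : EuclideanSpace ℝ (Fin n)) (M : Matrix (Fin n) (Fin n) ℝ) :
    ∃ a ∈ Hset n m, IsMinOn (fun a => supPhiT σ m a p M) (Hset n m) a :=
  (isCompact_Hset m).exists_isMinOn (Hset_nonempty hn m)
    (continuous_supPhiT σ m p M).continuousOn

lemma PhiT_le_supPhiT {σ : Fin n → ℝ} {m : ℕ} {p : EuclideanSpace ℝ (Fin n)}
    {M : Matrix (Fin n) (Fin n) ℝ} (a : EuclideanSpace ℝ (Fin n) × ℝ)
    {b : EuclideanSpace ℝ (Fin n) × ℝ} (hb : b ∈ Hset n m) :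
    PhiT σ a.1 b.1 a.2 b.2 p M ≤ supPhiT σ m a p M :=
  le_csSup ((isCompact_Hset m).image
    ((continuous_PhiT σ p M).comp (Continuous.prodMk_right a))).bddAbove ⟨b, hb, rfl⟩

lemma exists_bound_sigQF_of_tendsto (σ : Fin n → ℝ) {Ms : ℕ → Matrix (Fin n) (Fin n) ℝ}
    {M : Matrix (Fin n) (Fin n) ℝ} (hMs : Tendsto Ms atTop (𝓝 M)) (r : ℝ) :
    ∃ C, ∀ m v, ‖v‖ ≤ r → |sigQF σ (Ms m) v| ≤ C := by
  obtain ⟨C, hC⟩ := (hMs.isCompact_insert_range.prod (isCompact_closedBall 0 r))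
    |>.exists_bound_of_continuousOn (continuous_sigQF σ).continuousOn
  exact ⟨C, fun m v hv => hC (Ms m, v)
    ⟨Set.mem_insert_of_mem _ ⟨m, rfl⟩, mem_closedBall_zero_iff.mpr hv⟩⟩

lemma natCast_mul_norm_sub_inner_le {σ : Fin n → ℝ} {m : ℕ} {p : EuclideanSpace ℝ (Fin n)}
    {M : Matrix (Fin n) (Fin n) ℝ} {C : ℝ} (hp : p ≠ 0)
    (hC : ∀ v, ‖v‖ ≤ 2 → |sigQF σ M v| ≤ C) {a : EuclideanSpace ℝ (Fin n) × ℝ}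
    (ha : a ∈ Hset n m) (hmin : IsMinOn (fun a => supPhiT σ m a p M) (Hset n m) a) :
    (m : ℝ) * (‖p‖ - ⟪a.1, p⟫) ≤ C := by
  set q := ‖p‖⁻¹ • p
  have hq : ‖q‖ = 1 := norm_smul_inv_norm hp
  have hqp : ⟪q, p⟫ = ‖p‖ := by
    rw [real_inner_smul_left, real_inner_self_eq_norm_sq, sq,
      inv_mul_cancel_left₀ (norm_ne_zero_iff.mpr hp)]
  have hquad : ∀ u w : EuclideanSpace ℝ (Fin n), ‖u‖ = 1 → ‖w‖ = 1 →
      |sigQF σ M (u - w)| ≤ C := fun u w hu hw =>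
    hC _ ((norm_sub_le u w).trans (by rw [hu, hw]; norm_num))
  have hinner : ∀ w : EuclideanSpace ℝ (Fin n), ‖w‖ = 1 → ⟪w, p⟫ ≤ ‖p‖ := fun w hw =>
    (real_inner_le_norm w p).trans (by rw [hw, one_mul])
  have hupper : supPhiT σ m (q, 0) p M ≤ C / 2 := by
    refine csSup_le ((Set.nonempty_of_mem ha).image _) ?_
    rintro _ ⟨b, ⟨hb, hb₀, -⟩, rfl⟩
    have hlin : 0 ≤ ⟪q + b.1, p⟫ := by
      have := hinner (-b.1) (by rw [norm_neg, hb])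
      rw [inner_neg_left] at this
      rw [inner_add_left, hqp]
      linarith
    simp only [PhiT, zero_add]
    nlinarith [abs_le.mp (hquad q b.1 hq hb)]
  have hlower : -(C / 2) + m * (‖p‖ - ⟪a.1, p⟫) ≤ supPhiT σ m a p M := by
    refine le_trans ?_ (PhiT_le_supPhiT (b := (-q, (m : ℝ))) a ⟨by rw [norm_neg, hq],
      Nat.cast_nonneg m, le_rfl⟩)
    have hgap : 0 ≤ ‖p‖ - ⟪a.1, p⟫ := sub_nonneg.mpr (hinner a.1 ha.1)
    have hpt : ⟪a.1 + -q, p⟫ = ⟪a.1, p⟫ - ‖p‖ := by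
      rw [inner_add_left, inner_neg_left, hqp, sub_eq_add_neg]
    simp only [PhiT, hpt]
    nlinarith [abs_le.mp (hquad a.1 (-q) ha.1 (by rw [norm_neg, hq])), ha.2.1]
  have hq₀ : ((q, 0) : EuclideanSpace ℝ (Fin n) × ℝ) ∈ Hset n m := ⟨hq, le_rfl, Nat.cast_nonneg m⟩
  linarith [isMinOn_iff.mp hmin _ hq₀]

end MinimizingDirections

theorem minimizing_directions_converge_general (n : ℕ) (hn : 1 ≤ n)
    (σ : Fin n → ℝ)
    (ps : ℕ → EuclideanSpace ℝ (Fin n)) (Ms : ℕ → Matrix (Fin n) (Fin n) ℝ)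
    (p : EuclideanSpace ℝ (Fin n)) (M : Matrix (Fin n) (Fin n) ℝ)
    (hp : p ≠ 0)
    (hpt : Tendsto ps atTop (𝓝 p)) (hMt : Tendsto Ms atTop (𝓝 M)) :
    (∀ m : ℕ, ∃ a ∈ Hset n m, ∀ b ∈ Hset n m,
      supPhiT σ m a (ps m) (Ms m) ≤ supPhiT σ m b (ps m) (Ms m)) ∧
    ∀ a : ℕ → EuclideanSpace ℝ (Fin n) × ℝ,
      (∀ m : ℕ, a m ∈ Hset n m ∧ ∀ b ∈ Hset n m,
        supPhiT σ m (a m) (ps m) (Ms m) ≤ supPhiT σ m b (ps m) (Ms m)) →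
      Tendsto (fun m => ⟪(a m).1, ps m⟫) atTop (𝓝 ‖p‖) ∧
      Tendsto (fun m => (a m).1) atTop (𝓝 (‖p‖⁻¹ • p)) := by
  refine ⟨fun m => ?_, fun a ha => ?_⟩
  · obtain ⟨a, ha, hmin⟩ := exists_isMinOn_supPhiT hn σ m (ps m) (Ms m)
    exact ⟨a, ha, isMinOn_iff.mp hmin⟩
  obtain ⟨C, hC⟩ := exists_bound_sigQF_of_tendsto σ hMt 2
  have hunit : ∀ m, ‖(a m).1‖ = 1 := fun m => (ha m).1.1
  have hnorm : Tendsto (fun m => ‖ps m‖) atTop (𝓝 ‖p‖) := hpt.norm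
  have hinner : Tendsto (fun m => ⟪(a m).1, ps m⟫) atTop (𝓝 ‖p‖) := by
    have hlow := hnorm.sub (tendsto_const_div_atTop_nhds_zero_nat C)
    rw [sub_zero] at hlow
    refine tendsto_of_tendsto_of_tendsto_of_le_of_le' hlow hnorm ?_
      (Eventually.of_forall fun m => (real_inner_le_norm _ _).trans (by rw [hunit, one_mul]))
    filter_upwards [hpt.eventually_ne hp, eventually_gt_atTop 0] with m hpm hm
    rw [sub_le_comm, le_div_iff₀' (by exact_mod_cast hm)]
    exact natCast_mul_norm_sub_inner_le hpm (hC m) (ha m).1 (isMinOn_iff.mpr (ha m).2)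
  exact ⟨hinner, tendsto_normalize_of_tendsto_inner hunit hpt hp hinner⟩

/-- claims (5.1) and (5.4) in the proof of Lemma 5.1: for each `m` the
inner-sup function attains its infimum over `ℋ_m` at some `(θ_m⁺, d_m⁺)`, and every such
sequence of minimizers satisfies `θ_m⁺ · p_m → |p|` and `θ_m⁺ → p/|p|`. -/
theorem minimizing_directions_converge (n : ℕ) (hn : 1 ≤ n)
    (σ : Fin n → ℝ) (hσ : ∀ i, 0 < σ i)
    (ps : ℕ → EuclideanSpace ℝ (Fin n)) (Ms : ℕ → Matrix (Fin n) (Fin n) ℝ)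
    (p : EuclideanSpace ℝ (Fin n)) (M : Matrix (Fin n) (Fin n) ℝ)
    (hMs : ∀ m, (Ms m).IsSymm) (hM : M.IsSymm) (hp : p ≠ 0)
    (hpt : Tendsto ps atTop (𝓝 p)) (hMt : Tendsto Ms atTop (𝓝 M)) :
    (∀ m : ℕ, ∃ a ∈ Hset n m, ∀ b ∈ Hset n m,
      supPhiT σ m a (ps m) (Ms m) ≤ supPhiT σ m b (ps m) (Ms m)) ∧
    ∀ a : ℕ → EuclideanSpace ℝ (Fin n) × ℝ,
      (∀ m : ℕ, a m ∈ Hset n m ∧ ∀ b ∈ Hset n m,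
        supPhiT σ m (a m) (ps m) (Ms m) ≤ supPhiT σ m b (ps m) (Ms m)) →
      Tendsto (fun m => ⟪(a m).1, ps m⟫) atTop (𝓝 ‖p‖) ∧
      Tendsto (fun m => (a m).1) atTop (𝓝 (‖p‖⁻¹ • p)) :=
  minimizing_directions_converge_general n hn σ ps Ms p M hp hpt hMt

end TugOfWar
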